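/- Let x̄ ∈ {−1,+1}³, ȳ ∈ ℝ³, z̄ ∈ ℝ³ with ⟨z̄, x̄⟩ = 0, and C = Diag(ȳ) − z̄ z̄ᵀ. Then the MaxCut SDP max{Tr(CX) : diag(X) = 𝟙, X ⪰ 0, X ∈ Sym(3)} and its dual admit a strictly complementary pair of optimal solutions if and only if z̄_i = 0 for some i ∈ {1,2,3}. -/

import Mathlib

/-!
Because `⟨z̄, x̄⟩ = 0`, the cut matrix `x̄x̄ᵀ` attains the bound `Tr(CX) = ∑ ȳᵢ - z̄ᵀXz̄ ≤ ∑ ȳᵢ`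
valid on the elliptope, so the primal optima are the feasible `X` with `Xz̄ = 0`. Testing a dual
feasible `y` against `x̄` gives `∑ yᵢ - ∑ ȳᵢ = x̄ᵀ(Diag y - C)x̄ ≥ 0`, with equality only for
`y = ȳ`, whose slack is `z̄z̄ᵀ`. Strict complementarity thus asks for a feasible `X` with `Xz̄ = 0`
and `X + z̄z̄ᵀ ≻ 0`. If no `z̄ᵢ` vanishes, the equations `Xz̄ = 0` force `X = x̄x̄ᵀ`, and a sum of
two rank-one matrices is singular in dimension three. If `z̄ᵢ = 0`, then `X = uuᵀ + eᵢeᵢᵀ` with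
`u = x̄ - x̄ᵢeᵢ` works, because `eᵢ`, `x̄` and `z̄` span `ℝ³` (or `X = 1` when `z̄ = 0`).
-/

open Matrix

theorem Matrix.rank_add_le {m n K : Type*} [Fintype m] [Fintype n] [Field K]
    (A B : Matrix m n K) : (A + B).rank ≤ A.rank + B.rank := by
  rw [Matrix.rank, Matrix.rank, Matrix.rank, Matrix.mulVecLin_add]
  exact (Submodule.finrank_mono (LinearMap.range_add_le _ _)).trans
    (Submodule.finrank_add_le_finrank_add_finrank _ _)

theorem dotProduct_vecMulVec_self_mulVec {n R : Type*} [Fintype n] [CommRing R] (a v : n → R) :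
    v ⬝ᵥ (vecMulVec a a *ᵥ v) = (a ⬝ᵥ v) ^ 2 := by
  rw [vecMulVec_mulVec, op_smul_eq_smul, dotProduct_smul, smul_eq_mul, dotProduct_comm, sq]

theorem vecMulVec_mulVec_eq_zero {m n R : Type*} [Fintype n] [NonUnitalSemiring R]
    {a : m → R} {b z : n → R} (h : b ⬝ᵥ z = 0) : vecMulVec a b *ᵥ z = 0 := by
  rw [vecMulVec_mulVec, h, MulOpposite.op_zero, zero_smul]

theorem diagonal_sub_diagonal_sub_vecMulVec {n R : Type*} [DecidableEq n] [Ring R]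
    (y d z : n → R) :
    diagonal y - (diagonal d - vecMulVec z z) = diagonal (y - d) + vecMulVec z z := by
  rw [sub_sub_eq_add_sub, add_sub_right_comm, diagonal_sub]
  rfl

theorem posSemidef_vecMulVec_self {n : Type*} [Fintype n] (a : n → ℝ) :
    (vecMulVec a a).PosSemidef := by
  simpa using posSemidef_vecMulVec_self_star a

theorem not_posDef_vecMulVec_add_vecMulVec {n : Type*} [Fintype n] [DecidableEq n]
    (hn : 2 < Fintype.card n) (a b : n → ℝ) : ¬ (vecMulVec a a + vecMulVec b b).PosDef := by
  intro h
  have hrank := rank_of_isUnit _ h.isUnit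
  have hle := (Matrix.rank_add_le (vecMulVec a a) (vecMulVec b b)).trans
    (add_le_add (rank_vecMulVec_le a a) (rank_vecMulVec_le b b))
  omega

theorem posDef_vecMulVec_add_vecMulVec_add_vecMulVec {n : Type*} [Fintype n] {a b c : n → ℝ}
    (h : ∀ v, a ⬝ᵥ v = 0 → b ⬝ᵥ v = 0 → c ⬝ᵥ v = 0 → v = 0) :
    (vecMulVec a a + vecMulVec b b + vecMulVec c c).PosDef := by
  refine .of_dotProduct_mulVec_pos
    ((posSemidef_vecMulVec_self a).add (posSemidef_vecMulVec_self b) |>.add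
      (posSemidef_vecMulVec_self c)).isHermitian fun v hv => ?_
  rw [star_trivial, add_mulVec, add_mulVec, dotProduct_add, dotProduct_add,
    dotProduct_vecMulVec_self_mulVec, dotProduct_vecMulVec_self_mulVec,
    dotProduct_vecMulVec_self_mulVec]
  refine (by positivity : (0 : ℝ) ≤ _).lt_of_ne fun h0 => hv ?_
  rw [eq_comm, add_eq_zero_iff_of_nonneg (by positivity) (by positivity),
    add_eq_zero_iff_of_nonneg (by positivity) (by positivity)] at h0
  obtain ⟨⟨ha, hb⟩, hc⟩ := h0
  exact h v (eq_zero_of_pow_eq_zero ha) (eq_zero_of_pow_eq_zero hb) (eq_zero_of_pow_eq_zero hc)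

theorem eq_zero_of_triple_product_ne_zero {R : Type*} [CommRing R] [NoZeroDivisors R]
    {a b c v : Fin 3 → R} (habc : a ⬝ᵥ b ⨯₃ c ≠ 0)
    (ha : a ⬝ᵥ v = 0) (hb : b ⬝ᵥ v = 0) (hc : c ⬝ᵥ v = 0) : v = 0 := by
  rw [triple_product_eq_det] at habc
  refine eq_zero_of_mulVec_eq_zero habc ?_
  ext i
  fin_cases i <;> simpa [mulVec]

theorem sq_dotProduct_cross_of_dotProduct_eq_zero {R : Type*} [CommRing R] {a b z : Fin 3 → R}
    (ha : z ⬝ᵥ a = 0) (hb : z ⬝ᵥ b = 0) :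
    (z ⬝ᵥ a ⨯₃ b) ^ 2 = (z ⬝ᵥ z) * (a ⨯₃ b ⬝ᵥ a ⨯₃ b) := by
  have hcross : z ⨯₃ (a ⨯₃ b) = 0 := by
    rw [cross_cross_eq_smul_sub_smul', dotProduct_comm a, ha, hb, zero_smul, zero_smul, sub_zero]
  have := cross_dot_cross z (a ⨯₃ b) z (a ⨯₃ b)
  rw [hcross, zero_dotProduct, dotProduct_comm (a ⨯₃ b) z] at this
  linear_combination this

theorem eq_zero_of_isSymm_of_mulVec_eq_zero {D : Matrix (Fin 3) (Fin 3) ℝ} {z : Fin 3 → ℝ}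
    (hD : D.IsSymm) (hDd : ∀ i, D i i = 0) (hDz : D *ᵥ z = 0) (hz : ∀ i, z i ≠ 0) : D = 0 := by
  have e0 := congrFun hDz 0
  have e1 := congrFun hDz 1
  have e2 := congrFun hDz 2
  simp only [mulVec, dotProduct, Fin.sum_univ_three, hDd, Pi.zero_apply, hD.apply 0 1,
    hD.apply 0 2, hD.apply 1 2] at e0 e1 e2
  -- the homogeneous system in the three off-diagonal entries has determinant `-2 z₀ z₁ z₂`
  have h01 : D 0 1 = 0 := by
    have : 2 * z 0 * z 1 * D 0 1 = 0 := by linear_combination z 0 * e0 + z 1 * e1 - z 2 * e2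
    simpa [hz] using this
  have h02 : D 0 2 = 0 := by
    have : 2 * z 0 * z 2 * D 0 2 = 0 := by linear_combination z 0 * e0 - z 1 * e1 + z 2 * e2
    simpa [hz] using this
  have h12 : D 1 2 = 0 := by
    have : 2 * z 1 * z 2 * D 1 2 = 0 := by linear_combination -z 0 * e0 + z 1 * e1 + z 2 * e2
    simpa [hz] using this
  ext i j
  fin_cases i <;> fin_cases j <;>
    simp [hDd, h01, h02, h12, hD.apply 0 1, hD.apply 0 2, hD.apply 1 2]

theorem single_dotProduct_cross_ne_zero {x z : Fin 3 → ℝ} {i : Fin 3}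
    (hx : ∀ j, x j * x j = 1) (hz : z ⬝ᵥ x = 0) (hzi : z i = 0) (hz0 : z ≠ 0) :
    Pi.single i 1 ⬝ᵥ x ⨯₃ z ≠ 0 := by
  set e : Fin 3 → ℝ := Pi.single i 1
  have hxx : x ⬝ᵥ x = 3 := by simp [dotProduct, hx]
  have hcross : e ⨯₃ x ⬝ᵥ e ⨯₃ x = 2 := by
    rw [cross_dot_cross]
    simp only [e, single_dotProduct, dotProduct_single, hxx, Pi.single_eq_same, one_mul,
      mul_one]
    linarith [hx i]
  have hsq := sq_dotProduct_cross_of_dotProduct_eq_zero (a := e) (b := x)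
    (by simp [e, dotProduct_single, hzi]) hz
  rw [triple_product_permutation, triple_product_permutation]
  intro h
  rw [h, hcross, eq_comm] at hsq
  exact hz0 (dotProduct_self_eq_zero.mp (by simpa using hsq))

namespace MaxCut

variable {n : Type*} [Fintype n]

def IsPrimalOptimal (C X : Matrix n n ℝ) : Prop :=
  X.PosSemidef ∧ (∀ i, X i i = 1) ∧
    ∀ Y : Matrix n n ℝ, Y.PosSemidef → (∀ i, Y i i = 1) → (C * Y).trace ≤ (C * X).trace

variable [DecidableEq n]

def IsDualOptimal (C : Matrix n n ℝ) (y : n → ℝ) : Prop :=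
  (diagonal y - C).PosSemidef ∧
    ∀ y' : n → ℝ, (diagonal y' - C).PosSemidef → ∑ i, y i ≤ ∑ i, y' i

theorem trace_diagonal_sub_vecMulVec_mul (d z : n → ℝ) (Y : Matrix n n ℝ) :
    ((diagonal d - vecMulVec z z) * Y).trace = ∑ i, d i * Y i i - z ⬝ᵥ (Y *ᵥ z) := by
  rw [sub_mul, trace_sub, vecMulVec_mul, trace_vecMulVec, dotProduct_comm, ← dotProduct_mulVec]
  simp [trace, diagonal_mul]

theorem trace_mul_le_sum (d z : n → ℝ) {Y : Matrix n n ℝ} (hY : Y.PosSemidef)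
    (hYd : ∀ i, Y i i = 1) : ((diagonal d - vecMulVec z z) * Y).trace ≤ ∑ i, d i := by
  have := hY.dotProduct_mulVec_nonneg z
  rw [star_trivial] at this
  simp only [trace_diagonal_sub_vecMulVec_mul, hYd, mul_one]
  linarith

theorem trace_mul_eq_sum_iff (d z : n → ℝ) {Y : Matrix n n ℝ} (hY : Y.PosSemidef)
    (hYd : ∀ i, Y i i = 1) :
    ((diagonal d - vecMulVec z z) * Y).trace = ∑ i, d i ↔ Y *ᵥ z = 0 := by
  rw [trace_diagonal_sub_vecMulVec_mul, ← hY.dotProduct_mulVec_zero_iff, star_trivial]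
  simp only [hYd, mul_one, sub_eq_self]

variable {x d z : n → ℝ}

theorem isPrimalOptimal_iff (hx : ∀ i, x i * x i = 1) (hz : z ⬝ᵥ x = 0) {X : Matrix n n ℝ} :
    IsPrimalOptimal (diagonal d - vecMulVec z z) X ↔
      X.PosSemidef ∧ (∀ i, X i i = 1) ∧ X *ᵥ z = 0 := by
  refine and_congr_right fun hX => and_congr_right fun hXd => ?_
  rw [← trace_mul_eq_sum_iff d z hX hXd]
  refine ⟨fun hopt => (trace_mul_le_sum d z hX hXd).antisymm ?_, fun hX Y hY hYd => ?_⟩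
  · have hxx := posSemidef_vecMulVec_self x
    have hxxz : vecMulVec x x *ᵥ z = 0 := vecMulVec_mulVec_eq_zero (dotProduct_comm x z ▸ hz)
    rw [← (trace_mul_eq_sum_iff d z hxx hx).mpr hxxz]
    exact hopt _ hxx hx
  · exact hX ▸ trace_mul_le_sum d z hY hYd

theorem dotProduct_diagonal_mulVec_self (hx : ∀ i, x i * x i = 1) (w : n → ℝ) :
    x ⬝ᵥ (diagonal w *ᵥ x) = ∑ i, w i := by
  simp only [dotProduct, mulVec_diagonal]
  exact Finset.sum_congr rfl fun i _ => by linear_combination w i * hx i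

theorem dotProduct_diagonal_sub_mulVec_self (hx : ∀ i, x i * x i = 1) (hz : z ⬝ᵥ x = 0)
    (y : n → ℝ) :
    x ⬝ᵥ ((diagonal y - (diagonal d - vecMulVec z z)) *ᵥ x) = ∑ i, y i - ∑ i, d i := by
  rw [diagonal_sub_diagonal_sub_vecMulVec, add_mulVec, dotProduct_add,
    dotProduct_diagonal_mulVec_self hx, dotProduct_vecMulVec_self_mulVec, hz]
  simp [Finset.sum_sub_distrib]

theorem isDualOptimal_iff (hx : ∀ i, x i * x i = 1) (hz : z ⬝ᵥ x = 0) {y : n → ℝ} :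
    IsDualOptimal (diagonal d - vecMulVec z z) y ↔ y = d := by
  refine ⟨fun ⟨hS, hopt⟩ => ?_, ?_⟩
  · have hle := hopt d (by simpa using posSemidef_vecMulVec_self z)
    have hSx : (diagonal y - (diagonal d - vecMulVec z z)) *ᵥ x = 0 := by
      rw [← hS.dotProduct_mulVec_zero_iff, star_trivial,
        dotProduct_diagonal_sub_mulVec_self hx hz]
      have := hS.dotProduct_mulVec_nonneg x
      rw [star_trivial, dotProduct_diagonal_sub_mulVec_self hx hz] at this
      linarith
    funext i
    have hi := congrFun hSx i
    rw [diagonal_sub_diagonal_sub_vecMulVec, add_mulVec,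
      vecMulVec_mulVec_eq_zero (dotProduct_comm z x ▸ hz), add_zero, mulVec_diagonal] at hi
    exact sub_eq_zero.mp ((mul_eq_zero.mp hi).resolve_right fun h => by simpa [h] using hx i)
  · rintro rfl
    refine ⟨by simpa using posSemidef_vecMulVec_self z, fun y' hy' => ?_⟩
    have := hy'.dotProduct_mulVec_nonneg x
    rw [star_trivial, dotProduct_diagonal_sub_mulVec_self hx hz] at this
    linarith

theorem exists_strictComplementary_iff (hx : ∀ i, x i * x i = 1) (hz : z ⬝ᵥ x = 0) :
    (∃ (X : Matrix n n ℝ) (y : n → ℝ), IsPrimalOptimal (diagonal d - vecMulVec z z) X ∧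
        IsDualOptimal (diagonal d - vecMulVec z z) y ∧
        X * (diagonal y - (diagonal d - vecMulVec z z)) = 0 ∧
        (X + (diagonal y - (diagonal d - vecMulVec z z))).PosDef) ↔
      ∃ X : Matrix n n ℝ, X.PosSemidef ∧ (∀ i, X i i = 1) ∧ X *ᵥ z = 0 ∧
        (X + vecMulVec z z).PosDef := by
  constructor
  · rintro ⟨X, y, hX, hy, -, hpd⟩
    obtain rfl := (isDualOptimal_iff hx hz).mp hy
    obtain ⟨hXpsd, hXd, hXz⟩ := (isPrimalOptimal_iff hx hz).mp hX
    exact ⟨X, hXpsd, hXd, hXz, by rwa [sub_sub_cancel] at hpd⟩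
  · rintro ⟨X, hXpsd, hXd, hXz, hpd⟩
    refine ⟨X, d, (isPrimalOptimal_iff hx hz).mpr ⟨hXpsd, hXd, hXz⟩,
      (isDualOptimal_iff hx hz).mpr rfl, ?_, ?_⟩ <;> rw [sub_sub_cancel]
    · rw [mul_vecMulVec, hXz, zero_vecMulVec]
    · exact hpd

end MaxCut

section Fin3

variable {x z : Fin 3 → ℝ}

theorem eq_vecMulVec_self_of_mulVec_eq_zero (hx : ∀ i, x i * x i = 1) (hz : z ⬝ᵥ x = 0)
    (hz0 : ∀ i, z i ≠ 0) {X : Matrix (Fin 3) (Fin 3) ℝ} (hX : X.IsSymm) (hXd : ∀ i, X i i = 1)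
    (hXz : X *ᵥ z = 0) : X = vecMulVec x x := by
  refine sub_eq_zero.mp (eq_zero_of_isSymm_of_mulVec_eq_zero
    (hX.sub (posSemidef_vecMulVec_self x).isHermitian) (fun i => ?_) ?_ hz0)
  · rw [Matrix.sub_apply, hXd, vecMulVec_apply, hx, sub_self]
  · rw [sub_mulVec, hXz, vecMulVec_mulVec_eq_zero (dotProduct_comm x z ▸ hz), sub_zero]

theorem not_exists_posDef_add_vecMulVec_of_forall_ne_zero (hx : ∀ i, x i * x i = 1)
    (hz : z ⬝ᵥ x = 0) (hz0 : ∀ i, z i ≠ 0) :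
    ¬ ∃ X : Matrix (Fin 3) (Fin 3) ℝ, X.PosSemidef ∧ (∀ i, X i i = 1) ∧ X *ᵥ z = 0 ∧
        (X + vecMulVec z z).PosDef := by
  rintro ⟨X, hX, hXd, hXz, hpd⟩
  rw [eq_vecMulVec_self_of_mulVec_eq_zero hx hz hz0 (X := X) hX.isHermitian hXd hXz] at hpd
  exact not_posDef_vecMulVec_add_vecMulVec (by simp) x z hpd

theorem exists_posDef_add_vecMulVec_of_eq_zero (hx : ∀ i, x i * x i = 1) (hz : z ⬝ᵥ x = 0)
    {i : Fin 3} (hzi : z i = 0) :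
    ∃ X : Matrix (Fin 3) (Fin 3) ℝ, X.PosSemidef ∧ (∀ i, X i i = 1) ∧ X *ᵥ z = 0 ∧
        (X + vecMulVec z z).PosDef := by
  by_cases hz0 : z = 0
  · subst hz0
    exact ⟨1, .one, one_apply_eq, mulVec_zero 1, by simpa using PosDef.one⟩
  set e : Fin 3 → ℝ := Pi.single i 1
  set u : Fin 3 → ℝ := x - x i • e
  have hez : e ⬝ᵥ z = 0 := by rw [single_dotProduct, hzi, mul_zero]
  have huz : u ⬝ᵥ z = 0 := by rw [sub_dotProduct, smul_dotProduct, hez, dotProduct_comm, hz]; simp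
  refine ⟨vecMulVec u u + vecMulVec e e,
    (posSemidef_vecMulVec_self u).add (posSemidef_vecMulVec_self e), fun j => ?_, ?_,
    posDef_vecMulVec_add_vecMulVec_add_vecMulVec fun v huv hev hzv => ?_⟩
  · by_cases hj : j = i
    · subst hj
      simp [u, e, vecMulVec_apply]
    · simp [u, e, vecMulVec_apply, hj, hx]
  · rw [add_mulVec, vecMulVec_mulVec_eq_zero huz, vecMulVec_mulVec_eq_zero hez, add_zero]
  · have hxv : x ⬝ᵥ v = 0 := by
      rw [show x = u + x i • e by simp [u], add_dotProduct, smul_dotProduct, huv, hev]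
      simp
    exact eq_zero_of_triple_product_ne_zero (single_dotProduct_cross_ne_zero hx hz hzi hz0)
      hev hxv (dotProduct_comm v z ▸ hzv)

end Fin3

/-- For `n = 3` and `C = Diag(ȳ) − z̄ z̄ᵀ` with `z̄ ⊥ x̄`, `x̄ ∈ {±1}³`, strict
complementarity holds for the MaxCut SDP and its dual iff some coordinate of
`z̄` vanishes. -/
theorem maxCut3_strict_complementarity_iff (xbar ybar zbar : Fin 3 → ℝ)
    (hx : ∀ i, xbar i = 1 ∨ xbar i = -1)
    (hz : ∑ i, zbar i * xbar i = 0)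
    (C : Matrix (Fin 3) (Fin 3) ℝ)
    (hC : C = Matrix.diagonal ybar - Matrix.vecMulVec zbar zbar) :
    (∃ (X : Matrix (Fin 3) (Fin 3) ℝ) (y : Fin 3 → ℝ),
        -- X is primal optimal
        (X.PosSemidef ∧ (∀ i, X i i = 1) ∧
          ∀ Y : Matrix (Fin 3) (Fin 3) ℝ, Y.PosSemidef → (∀ i, Y i i = 1) →
            (C * Y).trace ≤ (C * X).trace) ∧
        -- y is dual optimal
        ((Matrix.diagonal y - C).PosSemidef ∧
          ∀ y' : Fin 3 → ℝ, (Matrix.diagonal y' - C).PosSemidef →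
            (∑ i, y i) ≤ (∑ i, y' i)) ∧
        -- strict complementarity
        X * (Matrix.diagonal y - C) = 0 ∧
        (X + (Matrix.diagonal y - C)).PosDef) ↔
      ∃ i, zbar i = 0 := by
  have hsign : ∀ i, xbar i * xbar i = 1 := fun i => mul_self_eq_one_iff.mpr (hx i)
  subst hC
  refine (MaxCut.exists_strictComplementary_iff hsign hz).trans ⟨fun h => ?_, fun ⟨i, hi⟩ =>
    exists_posDef_add_vecMulVec_of_eq_zero hsign hz hi⟩
  by_contra! hz0
  exact not_exists_posDef_add_vecMulVec_of_forall_ne_zero hsign hz hz0 h
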